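/- arXiv:1007.5458 — 3 statements merged into one kernel-verified Lean document; each statement's English description precedes it below -/
import Mathlib

section
/- Let (V, d, ℓ_2, ℓ_3, ℓ_4) be as in the preceding correspondences (ℓ_2 a graded antisymmetric weight-0 chain map vanishing on V_1 × V_1 with associated bracket [−,−]; ℓ_3 : V_0^3 → V_1 antisymmetric trilinear satisfying the L-infinity condition n = 3, vanishing in total degree ≥ 1, with Jacobiator J_{xyz} = ([[x,y],z], ℓ_3(x,y,z)); ℓ_4 : V_0^4 → V_2 antisymmetric quadrilinear satisfying the L-infinity condition n = 4, with Identiator μ_{xyzu} = ([[[x,y],z],u], h_{xyzu}, −ℓ_4(x,y,z,u))). Then the coherence law α_1 + α_4^{-1} = α_3 + α_2^{-1} holds for all x,y,z,u,v ∈ V_0 if and only if the L-infinity condition n = 5 holds: for all x,y,z,u,v ∈ V_0, ℓ_2(ℓ_4(x,y,z,u),v) − ℓ_2(ℓ_4(x,y,z,v),u) + ℓ_2(ℓ_4(x,y,u,v),z) − ℓ_2(ℓ_4(x,z,u,v),y) + ℓ_2(ℓ_4(y,z,u,v),x) + ℓ_4(ℓ_2(x,y),z,u,v) − ℓ_4(ℓ_2(x,z),y,u,v)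 + ℓ_4(ℓ_2(x,u),y,z,v) − ℓ_4(ℓ_2(x,v),y,z,u) + ℓ_4(ℓ_2(y,z),x,u,v) − ℓ_4(ℓ_2(y,u),x,z,v) + ℓ_4(ℓ_2(y,v),x,z,u) + ℓ_4(ℓ_2(z,u),x,y,v) − ℓ_4(ℓ_2(z,v),x,y,u) + ℓ_4(ℓ_2(u,v),x,y,z) = 0. -/
/- The linear 2-category G(V) associated with a 3-term chain complex
   V₂ --d₂--> V₁ --d₁--> V₀ (d₁ ∘ d₂ = 0):
   L₀ = V₀, L₁ = V₀ × V₁, L₂ = V₀ × V₁ × V₂,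
   s(v₀,…,v_m) = (v₀,…,v_{m-1}), t(v₀,…,v_m) = (v₀,…,v_{m-1} + d v_m),
   1_{(v₀,…,v_m)} = (v₀,…,v_m,0),
   (v₀,…,v_m) ∘_p (w₀,…,w_m) = (v₀,…,v_p, v_{p+1}+w_{p+1}, …, v_m+w_m). -/

namespace GV

variable {K : Type} [Field K] {V0 V1 V2 : Type}
  [AddCommGroup V0] [AddCommGroup V1] [AddCommGroup V2]
  [Module K V0] [Module K V1] [Module K V2]

variable (d1 : V1 →ₗ[K] V0) (d2 : V2 →ₗ[K] V1)

/-- Source of a 1-cell. -/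
def s1 (v : V0 × V1) : V0 := v.1

/-- Target of a 1-cell. -/
def t1 (v : V0 × V1) : V0 := v.1 + d1 v.2

/-- Source of a 2-cell. -/
def s2 (v : V0 × V1 × V2) : V0 × V1 := (v.1, v.2.1)

/-- Target of a 2-cell. -/
def t2 (v : V0 × V1 × V2) : V0 × V1 := (v.1, v.2.1 + d2 v.2.2)

/-- Identity 1-cell on a 0-cell. -/
def one0 (x : V0) : V0 × V1 := (x, 0)

/-- Identity 2-cell on a 1-cell. -/
def one1 (v : V0 × V1) : V0 × V1 × V2 := (v.1, v.2, 0)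

/-- Composition of 1-cells along a 0-cell. -/
def comp01 (v w : V0 × V1) : V0 × V1 := (v.1, v.2 + w.2)

/-- Composition of 2-cells along a 0-cell. -/
def comp02 (v w : V0 × V1 × V2) : V0 × V1 × V2 := (v.1, v.2.1 + w.2.1, v.2.2 + w.2.2)

/-- Composition of 2-cells along a 1-cell. -/
def comp12 (v w : V0 × V1 × V2) : V0 × V1 × V2 := (v.1, v.2.1, v.2.2 + w.2.2)

/-- Composability of 1-cells along a 0-cell: `t v = s w`. -/
def Comp01 (v w : V0 × V1) : Prop := t1 d1 v = s1 w

/-- Composability of 2-cells along a 0-cell: `t² v = s² w`. -/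
def Comp02 (v w : V0 × V1 × V2) : Prop := t1 d1 (t2 d2 v) = s1 (s2 w)

/-- Composability of 2-cells along a 1-cell: `t v = s w`. -/
def Comp12 (v w : V0 × V1 × V2) : Prop := t2 d2 v = s2 w


/-- A graded antisymmetric chain map `ℓ₂` of weight 0 on `V = (V₀,V₁,V₂)` which
vanishes on `V₁ × V₁`. -/
structure Ell2 (K : Type) [Field K] (V0 V1 V2 : Type)
    [AddCommGroup V0] [AddCommGroup V1] [AddCommGroup V2]
    [Module K V0] [Module K V1] [Module K V2]
    (d1 : V1 →ₗ[K] V0) (d2 : V2 →ₗ[K] V1) : Type where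
  l00 : V0 → V0 → V0
  l01 : V0 → V1 → V1
  l10 : V1 → V0 → V1
  l02 : V0 → V2 → V2
  l20 : V2 → V0 → V2
  l11 : V1 → V1 → V2
  bil00 : (∀ x, IsLinearMap K (l00 x)) ∧ (∀ y, IsLinearMap K (fun x => l00 x y))
  bil01 : (∀ x, IsLinearMap K (l01 x)) ∧ (∀ g, IsLinearMap K (fun x => l01 x g))
  bil10 : (∀ f, IsLinearMap K (l10 f)) ∧ (∀ y, IsLinearMap K (fun f => l10 f y))
  bil02 : (∀ x, IsLinearMap K (l02 x)) ∧ (∀ b, IsLinearMap K (fun x => l02 x b))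
  bil20 : (∀ a, IsLinearMap K (l20 a)) ∧ (∀ y, IsLinearMap K (fun a => l20 a y))
  bil11 : (∀ f, IsLinearMap K (l11 f)) ∧ (∀ g, IsLinearMap K (fun f => l11 f g))
  anti00 : ∀ x y, l00 x y = -l00 y x
  anti10 : ∀ f y, l10 f y = -l01 y f
  anti20 : ∀ a y, l20 a y = -l02 y a
  anti11 : ∀ f g, l11 f g = l11 g f
  chain01 : ∀ x g, d1 (l01 x g) = l00 x (d1 g)
  chain10 : ∀ f y, d1 (l10 f y) = l00 (d1 f) y
  chain02 : ∀ x b, d2 (l02 x b) = l01 x (d2 b)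
  chain20 : ∀ a y, d2 (l20 a y) = l10 (d2 a) y
  chain11 : ∀ f g, d2 (l11 f g) = l01 (d1 f) g - l10 f (d1 g)
  chain12 : ∀ f b, (0 : V2) = l02 (d1 f) b - l11 f (d2 b)
  vanish11 : ∀ f g, l11 f g = 0


variable {d1} {d2} in
/-- The bracket of 1-cells associated with `ℓ₂`:
`[(x,f),(y,g)] = (ℓ₂(x,y), ℓ₂(x,g) + ℓ₂(f, y + d g))`. -/
def br1 (E : Ell2 K V0 V1 V2 d1 d2) (v w : V0 × V1) : V0 × V1 :=
  (E.l00 v.1 w.1, E.l01 v.1 w.2 + E.l10 v.2 (w.1 + d1 w.2))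

variable {d1} {d2} in
/-- The bracket of 2-cells associated with `ℓ₂`:
`[(x,f,a),(y,g,b)] = (ℓ₂(x,y), ℓ₂(x,g) + ℓ₂(f, y + d g), ℓ₂(x,b) + ℓ₂(a,y))`. -/
def br2 (E : Ell2 K V0 V1 V2 d1 d2) (v w : V0 × V1 × V2) : V0 × V1 × V2 :=
  (E.l00 v.1 w.1, E.l01 v.1 w.2.1 + E.l10 v.2.1 (w.1 + d1 w.2.1),
    E.l02 v.1 w.2.2 + E.l20 v.2.2 w.1)

end GV

namespace GV

variable {K : Type} [Field K] {V0 V1 V2 : Type}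
  [AddCommGroup V0] [AddCommGroup V1] [AddCommGroup V2]
  [Module K V0] [Module K V1] [Module K V2]
  {d1 : V1 →ₗ[K] V0} {d2 : V2 →ₗ[K] V1}

/-- An antisymmetric trilinear map `ℓ₃ : V₀³ → V₁` satisfying the L∞ condition `n = 3`
(for its weight-1 graded antisymmetric extension by zero in total degree ≥ 1). -/
structure Ell3 (E : Ell2 K V0 V1 V2 d1 d2) : Type where
  l3 : V0 → V0 → V0 → V1
  tri : (∀ x y, IsLinearMap K (l3 x y)) ∧
    (∀ x z, IsLinearMap K (fun y => l3 x y z)) ∧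
    (∀ y z, IsLinearMap K (fun x => l3 x y z))
  anti12 : ∀ x y z, l3 x y z = -l3 y x z
  anti23 : ∀ x y z, l3 x y z = -l3 x z y
  cond1 : ∀ x y z, d1 (l3 x y z) + E.l00 (E.l00 x y) z - E.l00 (E.l00 x z) y +
      E.l00 (E.l00 y z) x = 0
  cond2 : ∀ x y f, E.l01 (E.l00 x y) f - E.l10 (E.l01 x f) y + E.l10 (E.l01 y f) x +
      l3 (d1 f) x y = 0
  cond3 : ∀ x y a, E.l02 (E.l00 x y) a - E.l20 (E.l02 x a) y + E.l20 (E.l02 y a) x = 0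

/-- A Jacobiator: a skew-symmetric trilinear natural 2-transformation
`[[−,−],•] ⇒ [[−,•],−] + [−,[−,•]]`. -/
structure Jacobiator (E : Ell2 K V0 V1 V2 d1 d2) : Type where
  J : V0 → V0 → V0 → V0 × V1
  tri : (∀ x y, IsLinearMap K (J x y)) ∧
    (∀ x z, IsLinearMap K (fun y => J x y z)) ∧
    (∀ y z, IsLinearMap K (fun x => J x y z))
  src : ∀ x y z, (J x y z).1 = E.l00 (E.l00 x y) z
  tgt : ∀ x y z, t1 d1 (J x y z) = E.l00 (E.l00 x z) y + E.l00 x (E.l00 y z)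
  anti12 : ∀ x y z, (J x y z).2 = -(J y x z).2
  anti23 : ∀ x y z, (J x y z).2 = -(J x z y).2
  nat3 : ∀ (x y z : V0) (f : V1) (a : V2),
      comp02 (br2 E (br2 E (x, 0, 0) (y, 0, 0)) (z, f, a))
          (one1 (J x y (t1 d1 (t2 d2 (z, f, a))))) =
        comp02 (one1 (J x y z))
          (br2 E (br2 E (x, 0, 0) (z, f, a)) (y, 0, 0) +
            br2 E (x, 0, 0) (br2 E (y, 0, 0) (z, f, a)))
  nat1 : ∀ (x y z : V0) (f : V1) (a : V2),
      comp02 (br2 E (br2 E (x, f, a) (y, 0, 0)) (z, 0, 0))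
          (one1 (J (t1 d1 (t2 d2 (x, f, a))) y z)) =
        comp02 (one1 (J x y z))
          (br2 E (br2 E (x, f, a) (z, 0, 0)) (y, 0, 0) +
            br2 E (x, f, a) (br2 E (y, 0, 0) (z, 0, 0)))
  nat2 : ∀ (x y z : V0) (f : V1) (a : V2),
      comp02 (br2 E (br2 E (x, 0, 0) (y, f, a)) (z, 0, 0))
          (one1 (J x (t1 d1 (t2 d2 (y, f, a))) z)) =
        comp02 (one1 (J x y z))
          (br2 E (br2 E (x, 0, 0) (z, 0, 0)) (y, f, a) +
            br2 E (x, 0, 0) (br2 E (y, f, a) (z, 0, 0)))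

end GV

namespace GV

variable {K : Type} [Field K] {V0 V1 V2 : Type}
  [AddCommGroup V0] [AddCommGroup V1] [AddCommGroup V2]
  [Module K V0] [Module K V1] [Module K V2]
  {d1 : V1 →ₗ[K] V0} {d2 : V2 →ₗ[K] V1}

/-- The Jacobiator 1-cell associated with `ℓ₃`: `J_{xyz} = ([[x,y],z], ℓ₃(x,y,z))`. -/
def Jc (E : Ell2 K V0 V1 V2 d1 d2) (T : Ell3 E) (x y z : V0) : V0 × V1 :=
  (E.l00 (E.l00 x y) z, T.l3 x y z)

/-- The 1-cell
`η_{xyzu} = [J_{xyz},1_u] ∘₀ (J_{[x,z],y,u} + J_{x,[y,z],u}) ∘₀ ([J_{xzu},1_y] + 1)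
  ∘₀ ([1_x,J_{yzu}] + 1)`, the unlabelled identity 1-cells being determined by
composability. -/
def eta (E : Ell2 K V0 V1 V2 d1 d2) (T : Ell3 E) (x y z u : V0) : V0 × V1 :=
  let g1 := br1 E (Jc E T x y z) (one0 u)
  let g2 := Jc E T (E.l00 x z) y u + Jc E T x (E.l00 y z) u
  let N3 := br1 E (Jc E T x z u) (one0 y)
  let g3 := N3 + one0 (t1 d1 g2 - N3.1)
  let N4 := br1 E (one0 x) (Jc E T y z u)
  let g4 := N4 + one0 (t1 d1 g3 - N4.1)
  comp01 (comp01 (comp01 g1 g2) g3) g4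

/-- The 1-cell
`ε_{xyzu} = J_{[x,y],z,u} ∘₀ ([J_{xyu},1_z] + 1)
  ∘₀ (J_{x,[y,u],z} + J_{[x,u],y,z} + J_{x,y,[z,u]})`. -/
def eps (E : Ell2 K V0 V1 V2 d1 d2) (T : Ell3 E) (x y z u : V0) : V0 × V1 :=
  let g1 := Jc E T (E.l00 x y) z u
  let N2 := br1 E (Jc E T x y u) (one0 z)
  let g2 := N2 + one0 (t1 d1 g1 - N2.1)
  let g3 := Jc E T x (E.l00 y u) z + Jc E T (E.l00 x u) y z + Jc E T x y (E.l00 z u)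
  comp01 (comp01 g1 g2) g3

/-- The quadrilinear 2-functor `F`, `F(α,β,γ,δ) = [[[α,β],γ],δ]`, on 2-cells. -/
def Fq (E : Ell2 K V0 V1 V2 d1 d2) (a b c d : V0 × V1 × V2) : V0 × V1 × V2 :=
  br2 E (br2 E (br2 E a b) c) d

/-- The quadrilinear 2-functor `G`,
`G(α,β,γ,δ) = [α,[[β,δ],γ]] + [α,[β,[γ,δ]]] + [[[α,δ],γ],β] + [[α,[γ,δ]],β]
  + [[α,γ],[β,δ]] + [[α,δ],[β,γ]]`, on 2-cells. -/
def Gq (E : Ell2 K V0 V1 V2 d1 d2) (a b c d : V0 × V1 × V2) : V0 × V1 × V2 :=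
  br2 E a (br2 E (br2 E b d) c) + br2 E a (br2 E b (br2 E c d)) +
    br2 E (br2 E (br2 E a d) c) b + br2 E (br2 E a (br2 E c d)) b +
    br2 E (br2 E a c) (br2 E b d) + br2 E (br2 E a d) (br2 E b c)

/-- An antisymmetric quadrilinear map `ℓ₄ : V₀⁴ → V₂` satisfying the L∞ condition
`n = 4` (in the form `d ℓ₄(x,y,z,u) − h_{xyzu} + e_{xyzu} = 0`, `ℓ₄(d f,x,y,z) = 0`). -/
structure Ell4 (E : Ell2 K V0 V1 V2 d1 d2) (T : Ell3 E) : Type where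
  l4 : V0 → V0 → V0 → V0 → V2
  quad : (∀ x y z, IsLinearMap K (l4 x y z)) ∧
    (∀ x y u, IsLinearMap K (fun z => l4 x y z u)) ∧
    (∀ x z u, IsLinearMap K (fun y => l4 x y z u)) ∧
    (∀ y z u, IsLinearMap K (fun x => l4 x y z u))
  anti12 : ∀ x y z u, l4 x y z u = -l4 y x z u
  anti23 : ∀ x y z u, l4 x y z u = -l4 x z y u
  anti34 : ∀ x y z u, l4 x y z u = -l4 x y u z
  cond1 : ∀ x y z u,
      d2 (l4 x y z u) - (eta E T x y z u).2 + (eps E T x y z u).2 = 0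
  cond2 : ∀ (f : V1) (x y z : V0), l4 (d1 f) x y z = 0

/-- An Identiator: a skew-symmetric quadrilinear 2-modification `μ : η ⇛ ε`. -/
structure Identiator (E : Ell2 K V0 V1 V2 d1 d2) (T : Ell3 E) : Type where
  mu : V0 → V0 → V0 → V0 → V0 × V1 × V2
  quad : (∀ x y z, IsLinearMap K (mu x y z)) ∧
    (∀ x y u, IsLinearMap K (fun z => mu x y z u)) ∧
    (∀ x z u, IsLinearMap K (fun y => mu x y z u)) ∧
    (∀ y z u, IsLinearMap K (fun x => mu x y z u))
  src : ∀ x y z u, s2 (mu x y z u) = eta E T x y z u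
  tgt : ∀ x y z u, t2 d2 (mu x y z u) = eps E T x y z u
  anti12 : ∀ x y z u, (mu x y z u).2.2 = -(mu y x z u).2.2
  anti23 : ∀ x y z u, (mu x y z u).2.2 = -(mu x z y u).2.2
  anti34 : ∀ x y z u, (mu x y z u).2.2 = -(mu x y u z).2.2
  mod4 : ∀ (x y z u : V0) (f : V1) (a : V2),
      comp02 (Fq E (x, 0, 0) (y, 0, 0) (z, 0, 0) (u, f, a))
          (mu x y z (t1 d1 (t2 d2 (u, f, a)))) =
        comp02 (mu x y z u) (Gq E (x, 0, 0) (y, 0, 0) (z, 0, 0) (u, f, a))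
  mod3 : ∀ (x y z u : V0) (f : V1) (a : V2),
      comp02 (Fq E (x, 0, 0) (y, 0, 0) (z, f, a) (u, 0, 0))
          (mu x y (t1 d1 (t2 d2 (z, f, a))) u) =
        comp02 (mu x y z u) (Gq E (x, 0, 0) (y, 0, 0) (z, f, a) (u, 0, 0))
  mod2 : ∀ (x y z u : V0) (f : V1) (a : V2),
      comp02 (Fq E (x, 0, 0) (y, f, a) (z, 0, 0) (u, 0, 0))
          (mu x (t1 d1 (t2 d2 (y, f, a))) z u) =
        comp02 (mu x y z u) (Gq E (x, 0, 0) (y, f, a) (z, 0, 0) (u, 0, 0))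
  mod1 : ∀ (x y z u : V0) (f : V1) (a : V2),
      comp02 (Fq E (x, f, a) (y, 0, 0) (z, 0, 0) (u, 0, 0))
          (mu (t1 d1 (t2 d2 (x, f, a))) y z u) =
        comp02 (mu x y z u) (Gq E (x, f, a) (y, 0, 0) (z, 0, 0) (u, 0, 0))

end GV

namespace GV

variable {K : Type} [Field K] {V0 V1 V2 : Type}
  [AddCommGroup V0] [AddCommGroup V1] [AddCommGroup V2]
  [Module K V0] [Module K V1] [Module K V2]
  {d1 : V1 →ₗ[K] V0} {d2 : V2 →ₗ[K] V1}

/-- The squared target `t²` of a 2-cell. -/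
def tt2 (d1 : V1 →ₗ[K] V0) (d2 : V2 →ₗ[K] V1) (v : V0 × V1 × V2) : V0 :=
  t1 d1 (t2 d2 v)

/-- Pad a sum `N` of 2-cells by the identity 2-cell `1²_c` on the 0-cell `c`
determined by composability with the previous factor `prev`. -/
def pad2 (d1 : V1 →ₗ[K] V0) (d2 : V2 →ₗ[K] V1) (prev N : V0 × V1 × V2) :
    V0 × V1 × V2 :=
  N + (tt2 d1 d2 prev - N.1, 0, 0)

/-- The inverse `α⁻¹ = (A, r + d a, −a)` of a 2-cell `α = (A, r, a)` for `∘₁`. -/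
def inv2 (d2 : V2 →ₗ[K] V1) (a : V0 × V1 × V2) : V0 × V1 × V2 :=
  (a.1, a.2.1 + d2 a.2.2, -a.2.2)

/-- The Identiator 2-cell associated with `ℓ₄`:
`μ_{xyzu} = ([[[x,y],z],u], h_{xyzu}, −ℓ₄(x,y,z,u))`. -/
def muc (E : Ell2 K V0 V1 V2 d1 d2) (T : Ell3 E) (Q : Ell4 E T) (x y z u : V0) :
    V0 × V1 × V2 :=
  ((eta E T x y z u).1, (eta E T x y z u).2, -Q.l4 x y z u)

/-- The 2-cell `α₁`. -/
def alpha1 (E : Ell2 K V0 V1 V2 d1 d2) (T : Ell3 E) (Q : Ell4 E T)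
    (x y z u v : V0) : V0 × V1 × V2 :=
  let f1 := one1 (Jc E T (E.l00 (E.l00 x y) z) u v)
  let f2 := muc E T Q x y z (E.l00 u v) + br2 E (muc E T Q x y z v) (one1 (one0 u))
  let N3 := one1 (br1 E (Jc E T x (E.l00 z v) y) (one0 u) +
    br1 E (Jc E T (E.l00 x v) z y) (one0 u) + br1 E (Jc E T x z (E.l00 y v)) (one0 u))
  let f3 := pad2 d1 d2 f2 N3
  let N4 := muc E T Q (E.l00 x v) y z u + muc E T Q x (E.l00 y v) z u +
    muc E T Q x y (E.l00 z v) u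
  let f4 := pad2 d1 d2 f3 N4
  comp02 (comp02 (comp02 f1 f2) f3) f4

/-- The 2-cell `α₄`. -/
def alpha4 (E : Ell2 K V0 V1 V2 d1 d2) (T : Ell3 E) (Q : Ell4 E T)
    (x y z u v : V0) : V0 × V1 × V2 :=
  let f1 := br2 E (muc E T Q x y z u) (one1 (one0 v))
  let N2 := one1 (br1 E (Jc E T (E.l00 x u) z y) (one0 v) +
    br1 E (Jc E T x z (E.l00 y u)) (one0 v) + br1 E (Jc E T x (E.l00 z u) y) (one0 v))
  let f2 := pad2 d1 d2 f1 N2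
  let f3 := muc E T Q (E.l00 x u) y z v + muc E T Q x (E.l00 y u) z v +
    muc E T Q x y (E.l00 z u) v
  let N4 := one1 (br1 E (br1 E (Jc E T x u v) (one0 z)) (one0 y) +
    br1 E (Jc E T x u v) (one0 (E.l00 y z)) +
    br1 E (one0 x) (br1 E (Jc E T y u v) (one0 z)) +
    br1 E (br1 E (one0 x) (Jc E T z u v)) (one0 y) +
    br1 E (one0 x) (br1 E (one0 y) (Jc E T z u v)) +
    br1 E (one0 (E.l00 x z)) (Jc E T y u v))
  let f4 := pad2 d1 d2 f3 N4
  comp02 (comp02 (comp02 f1 f2) f3) f4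

/-- The 2-cell `α₃`. -/
def alpha3 (E : Ell2 K V0 V1 V2 d1 d2) (T : Ell3 E) (Q : Ell4 E T)
    (x y z u v : V0) : V0 × V1 × V2 :=
  let f1 := muc E T Q (E.l00 x y) z u v
  let N2 := one1 (br1 E (Jc E T (E.l00 x y) v u) (one0 z))
  let f2 := pad2 d1 d2 f1 N2
  let N3 := br2 E (muc E T Q x y u v) (one1 (one0 z))
  let f3 := pad2 d1 d2 f2 N3
  let f4 := one1 (br1 E (Jc E T x y v) (one0 (E.l00 z u)) +
    Jc E T x y (E.l00 (E.l00 z v) u) + Jc E T x y (E.l00 z (E.l00 u v)) +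
    Jc E T (E.l00 (E.l00 x v) u) y z + Jc E T (E.l00 x v) (E.l00 y u) z +
    Jc E T (E.l00 x u) (E.l00 y v) z + Jc E T x (E.l00 (E.l00 y v) u) z +
    Jc E T (E.l00 x (E.l00 u v)) y z + Jc E T x (E.l00 y (E.l00 u v)) z +
    br1 E (Jc E T x y u) (one0 (E.l00 z v)))
  let N5 := one1 (Jc E T x (E.l00 y v) (E.l00 z u) +
    Jc E T (E.l00 x v) y (E.l00 z u) + Jc E T x (E.l00 y u) (E.l00 z v) +
    Jc E T (E.l00 x u) y (E.l00 z v))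
  let f5 := pad2 d1 d2 f4 N5
  comp02 (comp02 (comp02 (comp02 f1 f2) f3) f4) f5

/-- The 2-cell `α₂`. -/
def alpha2 (E : Ell2 K V0 V1 V2 d1 d2) (T : Ell3 E) (Q : Ell4 E T)
    (x y z u v : V0) : V0 × V1 × V2 :=
  let f1 := one1 (br1 E (br1 E (Jc E T x y z) (one0 u)) (one0 v))
  let f2 := muc E T Q (E.l00 x z) y u v + muc E T Q x (E.l00 y z) u v
  let N3 := one1 (br1 E (one0 x) (Jc E T (E.l00 y z) v u) +
    br1 E (Jc E T (E.l00 x z) v u) (one0 y))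
  let f3 := pad2 d1 d2 f2 N3
  let N4 := br2 E (one1 (one0 x)) (muc E T Q y z u v) +
    br2 E (muc E T Q x z u v) (one1 (one0 y))
  let f4 := pad2 d1 d2 f3 N4
  let N5 := one1 (br1 E (Jc E T x z v) (one0 (E.l00 y u)) +
    br1 E (Jc E T x z u) (one0 (E.l00 y v)) +
    br1 E (one0 (E.l00 x v)) (Jc E T y z u) +
    br1 E (one0 (E.l00 x u)) (Jc E T y z v))
  let f5 := pad2 d1 d2 f4 N5
  comp02 (comp02 (comp02 (comp02 f1 f2) f3) f4) f5

end GV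

/-
Both sides of the coherence law are 2-cells of G(V), i.e. triples in V₀ × V₁ × V₂, so the law
is three equations. The V₀-components are the iterated bracket of x, y, z, u, v on both sides.
The V₁-components are sums of sources and targets of Identiators, i.e. of the 1-cells η and ε
(the condition n = 4 says d ℓ₄ = h − e); after expansion they agree by antisymmetry and the
condition n = 3 on 1-cells, used at the Jacobiator components f = ℓ₃(p,q,r) (`l01_l00_l3`).
The V₂-components differ by exactly the L∞ expression for n = 5, once ℓ₄ is brought into
normal form by antisymmetry.
-/

namespace GV

variable {K : Type} [Field K] {V0 V1 V2 : Type}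
  [AddCommGroup V0] [AddCommGroup V1] [AddCommGroup V2]
  [Module K V0] [Module K V1] [Module K V2]
  {d1 : V1 →ₗ[K] V0} {d2 : V2 →ₗ[K] V1}

namespace Ell2

variable (E : Ell2 K V0 V1 V2 d1 d2)

lemma l01_zero_right (x : V0) : E.l01 x 0 = 0 := (E.bil01.1 x).map_zero
lemma l01_neg_right (x : V0) (f : V1) : E.l01 x (-f) = -E.l01 x f := (E.bil01.1 x).map_neg f
lemma l01_add_right (x : V0) (f g : V1) : E.l01 x (f + g) = E.l01 x f + E.l01 x g :=
  (E.bil01.1 x).map_add f g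
lemma l01_sub_right (x : V0) (f g : V1) : E.l01 x (f - g) = E.l01 x f - E.l01 x g :=
  (E.bil01.1 x).map_sub f g

lemma l02_zero_right (x : V0) : E.l02 x 0 = 0 := (E.bil02.1 x).map_zero
lemma l02_neg_right (x : V0) (a : V2) : E.l02 x (-a) = -E.l02 x a := (E.bil02.1 x).map_neg a

end Ell2

namespace Ell3

variable {E : Ell2 K V0 V1 V2 d1 d2} (T : Ell3 E)

lemma l3_add_left (a b y z : V0) : T.l3 (a + b) y z = T.l3 a y z + T.l3 b y z :=
  (T.tri.2.2 y z).map_add a b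
lemma l3_sub_left (a b y z : V0) : T.l3 (a - b) y z = T.l3 a y z - T.l3 b y z :=
  (T.tri.2.2 y z).map_sub a b
lemma l3_neg_left (x y z : V0) : T.l3 (-x) y z = -T.l3 x y z := (T.tri.2.2 y z).map_neg x
lemma l3_neg_mid (x y z : V0) : T.l3 x (-y) z = -T.l3 x y z := (T.tri.2.1 x z).map_neg y

lemma d1_l3 (x y z : V0) :
    d1 (T.l3 x y z) = -E.l00 (E.l00 x y) z + E.l00 (E.l00 x z) y - E.l00 (E.l00 y z) x := by
  rw [← sub_eq_zero, ← T.cond1 x y z]; abel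

lemma l01_l00_l3 (a b x y z : V0) :
    E.l01 (E.l00 a b) (T.l3 x y z) =
      E.l01 a (E.l01 b (T.l3 x y z)) - E.l01 b (E.l01 a (T.l3 x y z)) +
        T.l3 (E.l00 (E.l00 x y) z) a b - T.l3 (E.l00 (E.l00 x z) y) a b +
        T.l3 (E.l00 (E.l00 y z) x) a b := by
  have h := T.cond2 a b (T.l3 x y z)
  rw [d1_l3, l3_sub_left, l3_add_left, l3_neg_left, E.anti10, E.anti10] at h
  rw [← sub_eq_zero, ← h]
  abel

end Ell3

lemma Ell4.d2_l4 {E : Ell2 K V0 V1 V2 d1 d2} {T : Ell3 E} (Q : Ell4 E T) (x y z u : V0) :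
    d2 (Q.l4 x y z u) = (eta E T x y z u).2 - (eps E T x y z u).2 := by
  rw [← sub_eq_zero, ← Q.cond1 x y z u]; abel

variable (E : Ell2 K V0 V1 V2 d1 d2) {T : Ell3 E} (Q : Ell4 E T)

def ell5Defect (x y z u v : V0) : V2 :=
  E.l20 (Q.l4 x y z u) v - E.l20 (Q.l4 x y z v) u + E.l20 (Q.l4 x y u v) z -
    E.l20 (Q.l4 x z u v) y + E.l20 (Q.l4 y z u v) x +
    Q.l4 (E.l00 x y) z u v - Q.l4 (E.l00 x z) y u v + Q.l4 (E.l00 x u) y z v -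
    Q.l4 (E.l00 x v) y z u + Q.l4 (E.l00 y z) x u v - Q.l4 (E.l00 y u) x z v +
    Q.l4 (E.l00 y v) x z u + Q.l4 (E.l00 z u) x y v - Q.l4 (E.l00 z v) x y u +
    Q.l4 (E.l00 u v) x y z

lemma coherence_sub_eq (x y z u v : V0) :
    alpha1 E T Q x y z u v + inv2 d2 (alpha4 E T Q x y z u v) -
        (alpha3 E T Q x y z u v + inv2 d2 (alpha2 E T Q x y z u v)) =
      (0, 0, ell5Defect E Q x y z u v) := by
  simp only [alpha1, alpha2, alpha3, alpha4, inv2, muc, eta, eps, Jc, br1, br2, comp01,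
    comp02, pad2, tt2, t1, t2, one0, one1, ell5Defect, Prod.mk_add_mk, Prod.mk_sub_mk,
    Prod.mk.injEq, map_zero, map_add, map_neg, add_zero, zero_add, neg_neg,
    E.anti10, E.anti20, E.chain02, Q.d2_l4, E.l01_zero_right, E.l01_neg_right,
    E.l01_add_right, E.l01_sub_right, E.l02_zero_right, E.l02_neg_right]
  refine ⟨by abel, ?_, ?_⟩
  · grind [T.anti12, T.anti23, E.anti00, T.l01_l00_l3, T.l3_neg_mid, E.l01_neg_right]
  · grind [Q.anti12, Q.anti23, Q.anti34]

end GV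

open GV

theorem coherence_iff_ell5_general (K : Type) [Field K]
    (V0 V1 V2 : Type) [AddCommGroup V0] [AddCommGroup V1] [AddCommGroup V2]
    [Module K V0] [Module K V1] [Module K V2]
    (d1 : V1 →ₗ[K] V0) (d2 : V2 →ₗ[K] V1)
    (E : Ell2 K V0 V1 V2 d1 d2) (T : Ell3 E) (Q : Ell4 E T) :
    (∀ x y z u v : V0,
      alpha1 E T Q x y z u v + inv2 d2 (alpha4 E T Q x y z u v) =
        alpha3 E T Q x y z u v + inv2 d2 (alpha2 E T Q x y z u v))
    ↔
    (∀ x y z u v : V0,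
      E.l20 (Q.l4 x y z u) v - E.l20 (Q.l4 x y z v) u + E.l20 (Q.l4 x y u v) z -
        E.l20 (Q.l4 x z u v) y + E.l20 (Q.l4 y z u v) x +
        Q.l4 (E.l00 x y) z u v - Q.l4 (E.l00 x z) y u v + Q.l4 (E.l00 x u) y z v -
        Q.l4 (E.l00 x v) y z u + Q.l4 (E.l00 y z) x u v - Q.l4 (E.l00 y u) x z v +
        Q.l4 (E.l00 y v) x z u + Q.l4 (E.l00 z u) x y v - Q.l4 (E.l00 z v) x y u +
        Q.l4 (E.l00 u v) x y z = 0) := by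
  refine forall₅_congr fun x y z u v => ?_
  rw [← sub_eq_zero, coherence_sub_eq]
  simp only [Prod.mk_eq_zero, true_and, ell5Defect]

/-- With `ℓ₂, ℓ₃, ℓ₄` as in the preceding correspondences and the
associated bracket, Jacobiator and Identiator, the coherence law
`α₁ + α₄⁻¹ = α₃ + α₂⁻¹` holds for all `x,y,z,u,v ∈ V₀` iff the L∞ condition `n = 5`
holds. -/
theorem coherence_iff_ell5 (K : Type) [Field K]
    (V0 V1 V2 : Type) [AddCommGroup V0] [AddCommGroup V1] [AddCommGroup V2]
    [Module K V0] [Module K V1] [Module K V2]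
    (d1 : V1 →ₗ[K] V0) (d2 : V2 →ₗ[K] V1) (hdd : ∀ a, d1 (d2 a) = 0)
    (E : Ell2 K V0 V1 V2 d1 d2) (T : Ell3 E) (Q : Ell4 E T) :
    (∀ x y z u v : V0,
      alpha1 E T Q x y z u v + inv2 d2 (alpha4 E T Q x y z u v) =
        alpha3 E T Q x y z u v + inv2 d2 (alpha2 E T Q x y z u v))
    ↔
    (∀ x y z u v : V0,
      E.l20 (Q.l4 x y z u) v - E.l20 (Q.l4 x y z v) u + E.l20 (Q.l4 x y u v) z -
        E.l20 (Q.l4 x z u v) y + E.l20 (Q.l4 y z u v) x +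
        Q.l4 (E.l00 x y) z u v - Q.l4 (E.l00 x z) y u v + Q.l4 (E.l00 x u) y z v -
        Q.l4 (E.l00 x v) y z u + Q.l4 (E.l00 y z) x u v - Q.l4 (E.l00 y u) x z v +
        Q.l4 (E.l00 y v) x z u + Q.l4 (E.l00 z u) x y v - Q.l4 (E.l00 z v) x y u +
        Q.l4 (E.l00 u v) x y z = 0) :=
  coherence_iff_ell5_general K V0 V1 V2 d1 d2 E T Q
end

section
/- Let L be the linear category associated with a linear map d : V_1 → V_0 of K-vector spaces. Then the normalized Moore complex of the nerve of L is the 2-term chain complex of L: in degree 0 it is L_0 = V_0; in degree 1 it is ker(d_1) = ker(s) = {0} × V_1 ≅ V_1, with differential ∂ = d_0 = t restricting to d under this identification; and in every degree n ≥ 2 it vanishes: the intersection of the kernels of the face maps d_1, …, d_n on the space of n composable 1-cells is zero. -/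
/- The linear category L associated with a linear map d : V₁ → V₀ has
   L₀ = V₀, L₁ = V₀ × V₁, s(v₀,v₁) = v₀, t(v₀,v₁) = v₀ + d v₁, 1ₓ = (x,0),
   and composition (v₀,v₁) ∘ (v₀ + d v₁, w₁) = (v₀, v₁ + w₁).
   On L ⊠ L' (cells L₀ ⊗ L'₀ and L₁ ⊗ L'₁, source s ⊗ s', target t ⊗ t',
   identities 1 ⊗ 1') the composition is X ∘ Y = X + Y − (1 ⊗ 1')((t ⊗ t')(X)). -/

namespace TwoTerm

open scoped TensorProduct

variable {K : Type} [Field K] {V0 V1 : Type} [AddCommGroup V0] [AddCommGroup V1]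
  [Module K V0] [Module K V1]

/-- Source map `s : L₁ → L₀`. -/
def sMap (K : Type) [Field K] (V0 V1 : Type) [AddCommGroup V0] [AddCommGroup V1]
    [Module K V0] [Module K V1] : (V0 × V1) →ₗ[K] V0 :=
  LinearMap.fst K V0 V1

/-- Target map `t : L₁ → L₀`, `t(v₀,v₁) = v₀ + d v₁`. -/
def tMap (d : V1 →ₗ[K] V0) : (V0 × V1) →ₗ[K] V0 :=
  LinearMap.fst K V0 V1 + d.comp (LinearMap.snd K V0 V1)

/-- Identity map `1 : L₀ → L₁`, `1ₓ = (x,0)`. -/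
def oneMap (K : Type) [Field K] (V0 V1 : Type) [AddCommGroup V0] [AddCommGroup V1]
    [Module K V0] [Module K V1] : V0 →ₗ[K] (V0 × V1) :=
  LinearMap.prod LinearMap.id 0

/-- Composition of composable 1-cells of `L`: `(v₀,v₁) ∘ (v₀ + d v₁, w₁) = (v₀, v₁ + w₁)`. -/
def lcomp (v w : V0 × V1) : V0 × V1 := (v.1, v.2 + w.2)

variable {V'0 V'1 : Type} [AddCommGroup V'0] [AddCommGroup V'1]
  [Module K V'0] [Module K V'1]

/-- Composition on the 1-cells `L₁ ⊗ L'₁` of `L ⊠ L'`: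
`X ∘ Y = X + Y − (1 ⊗ 1')((t ⊗ t')(X))`. -/
noncomputable def bcomp (d : V1 →ₗ[K] V0) (d' : V'1 →ₗ[K] V'0)
    (X Y : (V0 × V1) ⊗[K] (V'0 × V'1)) : (V0 × V1) ⊗[K] (V'0 × V'1) :=
  X + Y -
    TensorProduct.map (oneMap K V0 V1) (oneMap K V'0 V'1)
      (TensorProduct.map (tMap d) (tMap d') X)

end TwoTerm

namespace TwoTerm

variable {K : Type} [Field K] {V0 V1 : Type} [AddCommGroup V0] [AddCommGroup V1]
  [Module K V0] [Module K V1]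

/-- The `k`-th face map (`1 ≤ k ≤ n`) of the nerve of `L`, on strings of `n`
composable 1-cells: `d_n` drops the last cell and `d_k` (`0 < k < n`) composes the
`k`-th and `(k+1)`-st cells. -/
def face (n k : ℕ) (f : Fin n → V0 × V1) : Fin (n - 1) → V0 × V1 :=
  fun j =>
    if (j : ℕ) + 1 < k then f ⟨j.val, by have := j.isLt; omega⟩
    else if (j : ℕ) + 1 = k then
      lcomp (f ⟨j.val, by have := j.isLt; omega⟩) (f ⟨j.val + 1, by have := j.isLt; omega⟩)
    else f ⟨j.val + 1, by have := j.isLt; omega⟩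

end TwoTerm

namespace TwoTerm

section Face

variable {V0 V1 : Type} [AddCommGroup V1]

lemma face_apply_of_succ_lt {n k : ℕ} (f : Fin n → V0 × V1) (j : Fin (n - 1))
    (h : (j : ℕ) + 1 < k) : face n k f j = f ⟨j, by omega⟩ :=
  if_pos h

lemma face_apply_of_succ_eq {n k : ℕ} (f : Fin n → V0 × V1) (j : Fin (n - 1))
    (h : (j : ℕ) + 1 = k) :
    face n k f j = lcomp (f ⟨j, by omega⟩) (f ⟨j + 1, by omega⟩) := by
  rw [face, if_neg (by omega), if_pos h]

lemma apply_eq_zero_of_face_self_eq_zero [Zero V0] {n : ℕ} {f : Fin n → V0 × V1}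
    (h : face n n f = 0) (i : Fin n) (hi : (i : ℕ) + 1 < n) : f i = 0 := by
  simpa [face_apply_of_succ_lt f ⟨i, by omega⟩ hi] using congrFun h ⟨i, by omega⟩

end Face

variable {K : Type} [Field K] {V0 V1 : Type} [AddCommGroup V0] [AddCommGroup V1]
  [Module K V0] [Module K V1]

@[simp]
lemma sMap_apply (f : V0 × V1) : sMap K V0 V1 f = f.1 := rfl

@[simp]
lemma tMap_apply (d : V1 →ₗ[K] V0) (f : V0 × V1) : tMap d f = f.1 + d f.2 := rfl

lemma sMap_eq_zero_iff (f : V0 × V1) : sMap K V0 V1 f = 0 ↔ ∃ x : V1, f = (0, x) :=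
  ⟨fun h => ⟨f.2, Prod.ext h rfl⟩, by rintro ⟨x, rfl⟩; rfl⟩

lemma tMap_zero_fst (d : V1 →ₗ[K] V0) (x : V1) : tMap d (0, x) = d x := zero_add _

/-- `d_{n+2}` kills all cells but the last, `d_{n+1}` then kills the `V₁`-part of the last cell,
and composability kills its source. -/
theorem eq_zero_of_face_last_eq_zero_of_face_pred_eq_zero (d : V1 →ₗ[K] V0) {n : ℕ}
    {f : Fin (n + 2) → V0 × V1}
    (hcomp : ∀ i : Fin (n + 1), tMap d (f i.castSucc) = sMap K V0 V1 (f i.succ))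
    (hlast : face (n + 2) (n + 2) f = 0) (hpred : face (n + 2) (n + 1) f = 0) : f = 0 := by
  have hinit := apply_eq_zero_of_face_self_eq_zero hlast
  funext i
  rcases Fin.eq_castSucc_or_eq_last i with ⟨i, rfl⟩ | rfl
  · exact hinit _ (by simpa using i.is_le)
  have hprev : f ⟨n, by omega⟩ = 0 := hinit _ (by simp)
  have hsrc : (f ⟨n + 1, by omega⟩).1 = 0 := by
    have h : tMap d (f ⟨n, by omega⟩) = sMap K V0 V1 (f ⟨n + 1, by omega⟩) :=
      hcomp (Fin.last n)
    simpa [hprev] using h.symm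
  have hsnd : (f ⟨n + 1, by omega⟩).2 = 0 := by
    have h := congrArg Prod.snd (congrFun hpred ⟨n, by omega⟩)
    simpa [face_apply_of_succ_eq, lcomp, hprev] using h
  exact Prod.ext hsrc hsnd

end TwoTerm

open TwoTerm

/-- The normalized Moore complex of the nerve of the linear category
`L` associated with `d : V₁ → V₀` is the 2-term chain complex of `L`: in degree 0 it is
`L₀ = V₀`; in degree 1 it is `ker s = {0} × V₁ ≅ V₁` with differential `∂ = d₀ = t`
restricting to `d`; and in every degree `n ≥ 2` it vanishes: the intersection of the
kernels of the face maps `d_1, …, d_n` on the space of `n` composable 1-cells is zero. -/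
theorem moore_complex_of_nerve (K : Type) [Field K]
    (V0 V1 : Type) [AddCommGroup V0] [AddCommGroup V1] [Module K V0] [Module K V1]
    (d : V1 →ₗ[K] V0) :
    -- degree 1: ker(d₁) = ker(s) = {0} × V₁ ≅ V₁, with differential d₀ = t restricting to d
    (∀ f : V0 × V1, sMap K V0 V1 f = 0 ↔ ∃ x : V1, f = (0, x)) ∧
    (∀ x : V1, tMap d (0, x) = d x) ∧
    -- degrees n ≥ 2: the Moore complex vanishes
    (∀ n, 2 ≤ n → ∀ f : Fin n → V0 × V1,
      (∀ i : Fin (n - 1),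
          tMap d (f ⟨i.val, by have := i.isLt; omega⟩) =
            sMap K V0 V1 (f ⟨i.val + 1, by have := i.isLt; omega⟩)) →
      (∀ k, 1 ≤ k → k ≤ n → face n k f = 0) →
      f = 0) := by
  refine ⟨sMap_eq_zero_iff, tMap_zero_fst d, ?_⟩
  intro n hn f hcomp hface
  obtain ⟨m, rfl⟩ : ∃ m, n = m + 2 := ⟨n - 2, by omega⟩
  exact eq_zero_of_face_last_eq_zero_of_face_pred_eq_zero d hcomp
    (hface _ (by omega) le_rfl) (hface (m + 1) (by omega) (by omega))
end

section
/- Let L and L' be the linear categories associated with linear maps d : V_1 → V_0 and d' : V'_1 → V'_0, let L ⊠ L' be the linear category with cells L_0 ⊗ L'_0 and L_1 ⊗ L'_1, source s ⊗ s', target t ⊗ t', identities 1 ⊗ 1' and composition X ∘ Y = X + Y − (1 ⊗ 1')((t ⊗ t')(X)), and let ℓ_n : (nerve(L) ⊗ nerve(L'))_n → nerve(L ⊠ L')_n be the linear maps determined by (f_1,…,f_n) ⊗ (f'_1,…,f'_n) ↦ (f_1 ⊗ f'_1, …, f_n ⊗ f'_n). Then for composable triples (u,v,w) in L and (u',v',w')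 in L': ℓ_2((d_2 ⊗ d_2)((u,v,w) ⊗ (u',v',w'))) = (u ⊗ u', (v ∘ w) ⊗ (v' ∘ w')) while d_2(ℓ_3((u,v,w) ⊗ (u',v',w'))) = (u ⊗ u', (v ⊗ v') ∘ (w ⊗ w')); moreover, if V_1 ≠ 0 and V'_1 ≠ 0 there exist composable triples for which these two elements differ, so the family (ℓ_n) does not commute with the face maps and hence is not a simplicial map. -/
namespace TwoTerm

open scoped TensorProduct

variable {K : Type} [Field K] {V0 V1 V'0 V'1 : Type}
  [AddCommGroup V0] [AddCommGroup V1] [AddCommGroup V'0] [AddCommGroup V'1]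
  [Module K V0] [Module K V1] [Module K V'0] [Module K V'1]

/-- The face map `d₂` of the nerve of `L` on strings of 3 composable 1-cells:
`d₂ (u,v,w) = (u, v ∘ w)`. -/
def dtwo (x : (V0 × V1) × (V0 × V1) × (V0 × V1)) : (V0 × V1) × (V0 × V1) :=
  (x.1, lcomp x.2.1 x.2.2)

/-- The value of `ℓ₂ : (nerve L ⊗ nerve L')₂ → nerve (L ⊠ L')₂` on a pure tensor of
2-strings: `(f₁,f₂) ⊗ (f'₁,f'₂) ↦ (f₁ ⊗ f'₁, f₂ ⊗ f'₂)`. -/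
noncomputable def elltwo (p : (V0 × V1) × (V0 × V1)) (p' : (V'0 × V'1) × (V'0 × V'1)) :
    ((V0 × V1) ⊗[K] (V'0 × V'1)) × ((V0 × V1) ⊗[K] (V'0 × V'1)) :=
  (p.1 ⊗ₜ[K] p'.1, p.2 ⊗ₜ[K] p'.2)

/-- The value of `ℓ₃` on a pure tensor of 3-strings. -/
noncomputable def ellthree (x : (V0 × V1) × (V0 × V1) × (V0 × V1))
    (x' : (V'0 × V'1) × (V'0 × V'1) × (V'0 × V'1)) :
    ((V0 × V1) ⊗[K] (V'0 × V'1)) × ((V0 × V1) ⊗[K] (V'0 × V'1)) ×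
      ((V0 × V1) ⊗[K] (V'0 × V'1)) :=
  (x.1 ⊗ₜ[K] x'.1, x.2.1 ⊗ₜ[K] x'.2.1, x.2.2 ⊗ₜ[K] x'.2.2)

/-- The face map `d₂` of the nerve of `L ⊠ L'` on strings of 3 composable 1-cells. -/
noncomputable def dtwoBox (d : V1 →ₗ[K] V0) (d' : V'1 →ₗ[K] V'0)
    (X : ((V0 × V1) ⊗[K] (V'0 × V'1)) × ((V0 × V1) ⊗[K] (V'0 × V'1)) ×
      ((V0 × V1) ⊗[K] (V'0 × V'1))) :
    ((V0 × V1) ⊗[K] (V'0 × V'1)) × ((V0 × V1) ⊗[K] (V'0 × V'1)) :=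
  (X.1, bcomp d d' X.2.1 X.2.2)

end TwoTerm

open TwoTerm
open scoped TensorProduct

/-! Taking `v` to be the identity at `0`, i.e. `v = 0`, gives `v ⊗ v' = 0`, so
`(v ⊗ v') ∘ (w ⊗ w') = w ⊗ w'` whereas `(v ∘ w) ⊗ (v' ∘ w') = w ⊗ (v' ∘ w')`. With `w = (0, a)`,
`v' = (0, a')` and `w' = 1_{d' a'}` for nonzero `a, a'`, these differ by `(0, a) ⊗ (-d' a', a')`,
a tensor product of nonzero vectors. -/

theorem TensorProduct.tmul_ne_zero_of_field {K M N : Type*} [Field K] [AddCommGroup M]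
    [Module K M] [AddCommGroup N] [Module K N] {m : M} {n : N} (hm : m ≠ 0) (hn : n ≠ 0) :
    m ⊗ₜ[K] n ≠ 0 := by
  obtain ⟨φ, hφ⟩ := Module.Projective.exists_dual_eq_one K hm
  obtain ⟨ψ, hψ⟩ := Module.Projective.exists_dual_eq_one K hn
  intro h
  simpa [hφ, hψ] using congrArg ((TensorProduct.lid K K).toLinearMap ∘ₗ TensorProduct.map φ ψ) h

namespace TwoTerm

section Composition

variable {V0 V1 : Type} [AddCommGroup V1]

theorem lcomp_id_left {v w : V0 × V1} (hv : v.2 = 0) (hw : w.1 = v.1) : lcomp v w = w := by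
  ext <;> simp [lcomp, hv, hw]

theorem lcomp_id_right (v : V0 × V1) (y : V0) : lcomp v (y, 0) = v := by
  simp [lcomp]

end Composition

theorem bcomp_zero_left {K : Type} [Field K] {V0 V1 V'0 V'1 : Type}
    [AddCommGroup V0] [AddCommGroup V1] [AddCommGroup V'0] [AddCommGroup V'1]
    [Module K V0] [Module K V1] [Module K V'0] [Module K V'1]
    (d : V1 →ₗ[K] V0) (d' : V'1 →ₗ[K] V'0) (Y : (V0 × V1) ⊗[K] (V'0 × V'1)) :
    bcomp d d' 0 Y = Y := by
  simp [bcomp]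

end TwoTerm

/-- For composable triples `(u,v,w)` in `L` and `(u',v',w')` in `L'`,
`ℓ₂ ((d₂ ⊗ d₂)((u,v,w) ⊗ (u',v',w'))) = (u ⊗ u', (v ∘ w) ⊗ (v' ∘ w'))` while
`d₂ (ℓ₃ ((u,v,w) ⊗ (u',v',w'))) = (u ⊗ u', (v ⊗ v') ∘ (w ⊗ w'))`; moreover, if
`V₁ ≠ 0` and `V'₁ ≠ 0` there exist composable triples for which these two elements
differ, so the family `(ℓₙ)` does not commute with the face maps and hence is not a
simplicial map. -/
theorem ell_not_simplicial (K : Type) [Field K]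
    (V0 V1 V'0 V'1 : Type) [AddCommGroup V0] [AddCommGroup V1]
    [AddCommGroup V'0] [AddCommGroup V'1]
    [Module K V0] [Module K V1] [Module K V'0] [Module K V'1]
    (d : V1 →ₗ[K] V0) (d' : V'1 →ₗ[K] V'0) :
    (∀ (u v w : V0 × V1) (u' v' w' : V'0 × V'1),
      tMap d u = sMap K V0 V1 v → tMap d v = sMap K V0 V1 w →
      tMap d' u' = sMap K V'0 V'1 v' → tMap d' v' = sMap K V'0 V'1 w' →
      elltwo (K := K) (dtwo (u, v, w)) (dtwo (u', v', w')) =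
          (u ⊗ₜ[K] u', lcomp v w ⊗ₜ[K] lcomp v' w') ∧
        dtwoBox d d' (ellthree (u, v, w) (u', v', w')) =
          (u ⊗ₜ[K] u', bcomp d d' (v ⊗ₜ[K] v') (w ⊗ₜ[K] w'))) ∧
    (Nontrivial V1 → Nontrivial V'1 →
      ∃ (u v w : V0 × V1) (u' v' w' : V'0 × V'1),
        tMap d u = sMap K V0 V1 v ∧ tMap d v = sMap K V0 V1 w ∧
        tMap d' u' = sMap K V'0 V'1 v' ∧ tMap d' v' = sMap K V'0 V'1 w' ∧
        elltwo (K := K) (dtwo (u, v, w)) (dtwo (u', v', w')) ≠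
          dtwoBox d d' (ellthree (u, v, w) (u', v', w'))) := by
  refine ⟨fun _ _ _ _ _ _ _ _ _ _ => ⟨rfl, rfl⟩, fun _ _ => ?_⟩
  obtain ⟨a, ha⟩ := exists_ne (0 : V1)
  obtain ⟨a', ha'⟩ := exists_ne (0 : V'1)
  refine ⟨0, 0, (0, a), 0, (0, a'), (d' a', 0),
    by simp [tMap, sMap], by simp [tMap, sMap], by simp [tMap, sMap], by simp [tMap, sMap], ?_⟩
  simp only [elltwo, dtwo, ellthree, dtwoBox, lcomp_id_left, Prod.fst_zero, Prod.snd_zero,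
    lcomp_id_right, TensorProduct.zero_tmul, bcomp_zero_left, ne_eq, Prod.mk.injEq, true_and]
  rw [← sub_eq_zero, ← TensorProduct.tmul_sub]
  exact TensorProduct.tmul_ne_zero_of_field (by simp [ha]) (by simp [ha'])
end
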